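/- arXiv:1301.7520 — 4 statements merged into one kernel-verified Lean document; each statement's English description precedes it below -/
import Mathlib

section
/- For every λ ∈ ℂ with λ ≠ 1, all a, n ∈ ℕ with a, n ≥ 1, and all x, the identity H_{n-1}^{(n)}(x|λ) = (1-λ)^{-(a-1)n} · Σ_{l=0}^{(a-1)n} C((a-1)n, l) · (-λ)^{(a-1)n-l} · H_{n-1}^{(an)}(x+l|λ) holds as an identity of polynomials in x. -/
/-!
Multiplying the generating function of `H^{(α)}(x|λ)` by `(1-λ)^β = (1-λ)^{α+β} / (1-λ)^α`
and writing `(e^t - λ)^β = ∑_l C(β,l) (-λ)^{β-l} e^{lt}` expresses it as a combination of the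
generating functions `((1-λ)/(e^t-λ))^{α+β} e^{(x+l)t}` of `H^{(α+β)}(x+l|λ)`; comparing
coefficients of `t^m` gives the identity, here with `α = n`, `β = (a-1)n`, `m = n-1`.
-/

/-- The formal power series `e^{ct} = ∑_{m≥0} c^m t^m / m!` over `ℂ`. -/
noncomputable def expPS (c : ℂ) : PowerSeries ℂ :=
  PowerSeries.mk fun m => c ^ m / (m.factorial : ℂ)

open PowerSeries Finset

lemma expPS_eq_rescale_exp (c : ℂ) : expPS c = rescale c (exp ℂ) := by
  ext m
  simp [expPS, coeff_rescale, coeff_exp, div_eq_mul_inv]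

lemma expPS_add (c d : ℂ) : expPS (c + d) = expPS c * expPS d := by
  simp only [expPS_eq_rescale_exp, exp_mul_exp_eq_exp_add]

lemma expPS_natCast (l : ℕ) : expPS l = expPS 1 ^ l := by
  induction l with
  | zero => simp [expPS_eq_rescale_exp]
  | succ k ih => rw [Nat.cast_succ, expPS_add, ih, pow_succ]

lemma expPS_sub_C_ne_zero {lam : ℂ} (hlam : lam ≠ 1) : expPS 1 - C lam ≠ 0 := by
  intro h
  have h0 : 1 - lam = 0 := by simpa [expPS] using congrArg (coeff 0) h
  exact hlam (sub_eq_zero.mp h0).symm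

lemma expPS_sub_C_pow (lam : ℂ) (N : ℕ) :
    (expPS 1 - C lam) ^ N =
      ∑ l ∈ range (N + 1), C ((N.choose l : ℂ) * (-lam) ^ (N - l)) * expPS l := by
  rw [sub_eq_add_neg, ← map_neg, add_pow]
  refine sum_congr rfl fun l _ => ?_
  rw [expPS_natCast, map_mul, map_pow, map_natCast]
  ring

section FrobeniusEuler

variable {lam : ℂ} {H : ℕ → ℕ → ℂ → ℂ}
  (hH : ∀ (α : ℕ) (x : ℂ),
    (expPS 1 - C lam) ^ α * mk (fun m => H α m x / (m.factorial : ℂ)) =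
      C (1 - lam) ^ α * expPS x)
include hH

theorem frobeniusEuler_genFun_raise_order (hlam : lam ≠ 1) (α β : ℕ) (x : ℂ) :
    C ((1 - lam) ^ β) * mk (fun m => H α m x / (m.factorial : ℂ)) =
      ∑ l ∈ range (β + 1), C ((β.choose l : ℂ) * (-lam) ^ (β - l)) *
        mk (fun m => H (α + β) m (x + l) / (m.factorial : ℂ)) := by
  set E := expPS 1 - C lam
  apply mul_left_cancel₀ (pow_ne_zero (α + β) (expPS_sub_C_ne_zero hlam))
  calc E ^ (α + β) * (C ((1 - lam) ^ β) * mk (fun m => H α m x / (m.factorial : ℂ)))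
      = C (1 - lam) ^ β * E ^ β * (E ^ α * mk (fun m => H α m x / (m.factorial : ℂ))) := by
        rw [map_pow]; ring
    _ = ∑ l ∈ range (β + 1), C ((β.choose l : ℂ) * (-lam) ^ (β - l)) *
          (C (1 - lam) ^ (α + β) * expPS (x + l)) := by
        rw [hH, expPS_sub_C_pow, mul_sum, sum_mul]
        refine sum_congr rfl fun l _ => ?_
        rw [expPS_add]; ring
    _ = E ^ (α + β) * ∑ l ∈ range (β + 1), C ((β.choose l : ℂ) * (-lam) ^ (β - l)) *
          mk (fun m => H (α + β) m (x + l) / (m.factorial : ℂ)) := by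
        rw [mul_sum]
        refine sum_congr rfl fun l _ => ?_
        rw [← hH]; ring

theorem one_sub_pow_mul_frobeniusEuler_eq_sum (hlam : lam ≠ 1) (α β m : ℕ) (x : ℂ) :
    (1 - lam) ^ β * H α m x =
      ∑ l ∈ range (β + 1), (β.choose l : ℂ) * (-lam) ^ (β - l) * H (α + β) m (x + l) := by
  have hcoeff := congrArg (coeff m) (frobeniusEuler_genFun_raise_order hH hlam α β x)
  simp only [map_sum, coeff_C_mul, coeff_mk] at hcoeff
  have hfac : (m.factorial : ℂ) ≠ 0 := Nat.cast_ne_zero.mpr m.factorial_ne_zero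
  rw [← mul_div_assoc, div_eq_iff hfac] at hcoeff
  rw [hcoeff, sum_mul]
  refine sum_congr rfl fun l _ => ?_
  rw [mul_assoc _ (H _ _ _ / _), div_mul_cancel₀ _ hfac]

end FrobeniusEuler

theorem stmt0_general (lam : ℂ) (hlam : lam ≠ 1) (a n : ℕ) (ha : 1 ≤ a)
    (H : ℕ → ℕ → ℂ → ℂ)
    (hH : ∀ (α : ℕ) (x : ℂ),
      (expPS 1 - PowerSeries.C lam) ^ α *
          PowerSeries.mk (fun m => H α m x / (m.factorial : ℂ)) =
        PowerSeries.C (1 - lam) ^ α * expPS x) :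
    ∀ x : ℂ,
      H n (n - 1) x =
        ((1 - lam) ^ ((a - 1) * n))⁻¹ *
          ∑ l ∈ Finset.range ((a - 1) * n + 1),
            (((a - 1) * n).choose l : ℂ) * (-lam) ^ ((a - 1) * n - l) *
              H (a * n) (n - 1) (x + l) := by
  intro x
  have horder : a * n = n + (a - 1) * n := by
    obtain ⟨b, rfl⟩ := Nat.exists_eq_add_of_le' ha
    simp only [Nat.add_sub_cancel]
    ring
  rw [eq_inv_mul_iff_mul_eq₀ (pow_ne_zero _ (sub_ne_zero.mpr hlam.symm)), horder]
  exact one_sub_pow_mul_frobeniusEuler_eq_sum hH hlam n ((a - 1) * n) (n - 1) x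

/-- For `λ ≠ 1`, `a, n ≥ 1`, and all `x`,
`H_{n-1}^{(n)}(x|λ) = (1-λ)^{-(a-1)n} ∑_{l=0}^{(a-1)n} C((a-1)n, l) (-λ)^{(a-1)n-l}
H_{n-1}^{(an)}(x+l|λ)`, where the Frobenius–Euler polynomials `H_m^{(α)}(x|λ)` are
characterized by `((1-λ)/(e^t-λ))^α e^{xt} = ∑_m H_m^{(α)}(x|λ) t^m/m!`. -/
theorem stmt0 (lam : ℂ) (hlam : lam ≠ 1) (a n : ℕ) (ha : 1 ≤ a) (hn : 1 ≤ n)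
    (H : ℕ → ℕ → ℂ → ℂ)
    (hH : ∀ (α : ℕ) (x : ℂ),
      (expPS 1 - PowerSeries.C lam) ^ α *
          PowerSeries.mk (fun m => H α m x / (m.factorial : ℂ)) =
        PowerSeries.C (1 - lam) ^ α * expPS x) :
    ∀ x : ℂ,
      H n (n - 1) x =
        ((1 - lam) ^ ((a - 1) * n))⁻¹ *
          ∑ l ∈ Finset.range ((a - 1) * n + 1),
            (((a - 1) * n).choose l : ℂ) * (-lam) ^ ((a - 1) * n - l) *
              H (a * n) (n - 1) (x + l) :=
  stmt0_general lam hlam a n ha H hH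
end

section
/- For every λ ∈ ℂ with λ ≠ 1, every integer n ≥ 1, every a ∈ ℤ_{≥0}, and all x, the identity H_{n-1}^{(an)}(x+1|λ) = Σ_{l=0}^{n-1} Σ_{k=0}^{l} S₁(n-1, l) · S₂(k+n, n) · (C(l,k)/C(k+n, n)) · H_{l-k}^{(an)}(x|λ) holds as an identity of polynomials in x. -/
open PowerSeries Finset

lemma expPS_mul_expPS (x y : ℂ) : expPS x * expPS y = expPS (x + y) := by
  simp only [expPS_eq_rescale_exp, exp_mul_exp_eq_exp_add]

lemma derivative_expPS_one : d⁄dX ℂ (expPS 1) = expPS 1 := by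
  rw [expPS_eq_rescale_exp, rescale_one, RingHom.id_apply, derivative_exp]

lemma constantCoeff_expPS (c : ℂ) : constantCoeff (expPS c) = 1 := by
  simp [expPS, ← coeff_zero_eq_constantCoeff_apply]

noncomputable def expSubOneDivX : ℂ⟦X⟧ := mk fun j => 1 / ((j + 1).factorial : ℂ)

lemma constantCoeff_expSubOneDivX : constantCoeff expSubOneDivX = 1 := by
  simp [expSubOneDivX, ← coeff_zero_eq_constantCoeff_apply]

lemma X_mul_expSubOneDivX : X * expSubOneDivX = expPS 1 - 1 := by
  ext (_ | m)
  · simp [expSubOneDivX, expPS]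
  · simp [coeff_succ_X_mul, expSubOneDivX, expPS, coeff_one]

lemma X_mul_derivative_expSubOneDivX :
    X * d⁄dX ℂ expSubOneDivX = expPS 1 - expSubOneDivX := by
  have h := congrArg (d⁄dX ℂ) X_mul_expSubOneDivX
  rw [Derivation.leibniz, smul_eq_mul, smul_eq_mul, derivative_X, mul_one, map_sub,
    derivative_expPS_one, Derivation.map_one_eq_zero, sub_zero] at h
  linear_combination h

lemma X_mul_sub_derivative_expSubOneDivX :
    X * (expSubOneDivX - d⁄dX ℂ expSubOneDivX) = expSubOneDivX - 1 := by
  rw [mul_sub, X_mul_expSubOneDivX, X_mul_derivative_expSubOneDivX]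
  ring

lemma coeff_expSubOneDivX_pow {n : ℕ} {S2 : ℕ → ℂ}
    (hS2 : (expPS 1 - 1) ^ n = C (n.factorial : ℂ) * mk fun l => S2 l / (l.factorial : ℂ))
    (k : ℕ) :
    coeff k (expSubOneDivX ^ n) = n.factorial * (S2 (k + n) / ((k + n).factorial : ℂ)) := by
  have h := congrArg (coeff (k + n)) hS2
  rwa [← X_mul_expSubOneDivX, mul_pow, coeff_X_pow_mul, coeff_C_mul, coeff_mk] at h

lemma coeff_X_mul_derivative {R : Type*} [CommSemiring R] (f : R⟦X⟧) (n : ℕ) :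
    coeff n (X * d⁄dX R f) = n * coeff n f := by
  cases n with
  | zero => simp
  | succ n => rw [coeff_succ_X_mul, coeff_derivative, mul_comm]; push_cast; rfl

lemma constantCoeff_aeval_derivative {R : Type*} [CommSemiring R] (P : Polynomial R)
    (f : R⟦X⟧) :
    constantCoeff (Polynomial.aeval (d⁄dX R : Module.End R R⟦X⟧) P f) =
      ∑ l ∈ range (P.natDegree + 1), P.coeff l * l.factorial * coeff l f := by
  simp only [Polynomial.aeval_eq_sum_range, LinearMap.sum_apply, map_sum, LinearMap.smul_apply,
    Module.End.pow_apply, Derivation.coeFn_coe, constantCoeff_smul,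
    constantCoeff_iterate_derivative, smul_eq_mul, mul_assoc]

-- `(D - N)(h^{N+2} F) / h^{N+1}` with `h = expSubOneDivX`
noncomputable def derivQuot (N : ℕ) (F : ℂ⟦X⟧) : ℂ⟦X⟧ :=
  (N + 2) * d⁄dX ℂ expSubOneDivX * F + expSubOneDivX * d⁄dX ℂ F - N * expSubOneDivX * F

lemma derivative_sub_mul_pow_mul (N : ℕ) (F : ℂ⟦X⟧) :
    d⁄dX ℂ (expSubOneDivX ^ (N + 2) * F) - N * (expSubOneDivX ^ (N + 2) * F) =
      expSubOneDivX ^ (N + 1) * derivQuot N F := by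
  rw [Derivation.leibniz, Derivation.leibniz_pow, derivQuot, smul_eq_mul, smul_eq_mul,
    nsmul_eq_mul, show N + 2 - 1 = N + 1 by omega]
  push_cast
  ring

lemma coeff_expPS_mul_derivQuot (N : ℕ) (F : ℂ⟦X⟧) :
    coeff N (expPS 1 * derivQuot N F) = coeff N (d⁄dX ℂ (expPS 1 * F)) := by
  set k := expSubOneDivX - d⁄dX ℂ expSubOneDivX with hkdef
  have hk : X * k = expSubOneDivX - 1 := X_mul_sub_derivative_expSubOneDivX
  have hk' : k + X * d⁄dX ℂ k = d⁄dX ℂ expSubOneDivX := by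
    simpa [Derivation.leibniz, derivative_X, add_comm] using congrArg (d⁄dX ℂ) hk
  -- `X R' - N R = t^{N+1} (R / t^N)'` has no `t^N` term.
  set R := expPS 1 * k * F
  have hR : expPS 1 * derivQuot N F - d⁄dX ℂ (expPS 1 * F) =
      X * d⁄dX ℂ R - (N : ℂ⟦X⟧) * R := by
    simp only [R, derivQuot, Derivation.leibniz, smul_eq_mul, derivative_expPS_one]
    linear_combination (-(expPS 1 * (F + d⁄dX ℂ F))) * hk - (expPS 1 * F) * hk'
      + ((N + 1) * expPS 1 * F) * hkdef
  rw [← sub_eq_zero, ← map_sub, hR, map_sub, coeff_X_mul_derivative,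
    ← map_natCast (C (R := ℂ)), coeff_C_mul, sub_self]

theorem constantCoeff_aeval_descPochhammer (N : ℕ) (F : ℂ⟦X⟧) :
    constantCoeff (Polynomial.aeval (d⁄dX ℂ : Module.End ℂ ℂ⟦X⟧) (descPochhammer ℂ N)
      (expSubOneDivX ^ (N + 1) * F)) = N.factorial * coeff N (expPS 1 * F) := by
  induction N generalizing F with
  | zero => simp [constantCoeff_expSubOneDivX, constantCoeff_expPS]
  | succ N ih =>
    rw [descPochhammer_succ_right, Polynomial.aeval_mul, Module.End.mul_apply,
      Polynomial.aeval_sub, Polynomial.aeval_X, map_natCast, LinearMap.sub_apply,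
      Module.End.natCast_apply, Derivation.coeFn_coe, nsmul_eq_mul, derivative_sub_mul_pow_mul,
      ih, coeff_expPS_mul_derivQuot, coeff_derivative, Nat.factorial_succ]
    push_cast
    ring

lemma coeff_descPochhammer_of_forall_prod_range {R : Type*} [CommRing R] [IsDomain R]
    [Infinite R] {m : ℕ} {c : ℕ → R}
    (hc : ∀ x : R, ∏ i ∈ range m, (x - i) = ∑ l ∈ range (m + 1), c l * x ^ l) {l : ℕ}
    (hl : l ≤ m) : (descPochhammer R m).coeff l = c l := by
  have hP : descPochhammer R m = ∑ l ∈ range (m + 1), Polynomial.C (c l) * Polynomial.X ^ l :=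
    Polynomial.funext fun x => by
      simp [descPochhammer_eval_eq_prod_range, hc, Polynomial.eval_finsetSum]
  simp [hP, Nat.lt_succ_iff.2 hl]

lemma choose_div_choose {K : Type*} [Field K] [CharZero K] {k l : ℕ} (n : ℕ) (hkl : k ≤ l) :
    (l.choose k : K) / ((k + n).choose n : K) =
      l.factorial * n.factorial / ((l - k).factorial * (k + n).factorial) := by
  have hk : (k.factorial : K) ≠ 0 := Nat.cast_ne_zero.2 k.factorial_ne_zero
  rw [Nat.cast_choose K hkl, Nat.cast_choose K (Nat.le_add_left n k), Nat.add_sub_cancel]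
  field_simp

lemma apply_add_one_eq_expPS_mul {lam : ℂ} (hlam : lam ≠ 1) {α : ℕ} {G : ℂ → ℂ⟦X⟧}
    (hG : ∀ x, (expPS 1 - C lam) ^ α * G x = C (1 - lam) ^ α * expPS x) (x : ℂ) :
    G (x + 1) = expPS 1 * G x := by
  have hu : (expPS 1 - C lam) ^ α ≠ 0 := by
    refine pow_ne_zero α fun h0 => hlam ?_
    have h1 : 1 - lam = 0 := by simpa [constantCoeff_expPS] using congrArg constantCoeff h0
    linear_combination -h1
  refine mul_left_cancel₀ hu ?_
  rw [hG, mul_left_comm, hG, ← expPS_mul_expPS]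
  ring

/-- For `λ ≠ 1`, `n ≥ 1`, `a ∈ ℤ_{≥0}` and all `x`,
`H_{n-1}^{(an)}(x+1|λ) = ∑_{l=0}^{n-1} ∑_{k=0}^{l} S₁(n-1,l) S₂(k+n,n)
 (C(l,k)/C(k+n,n)) H_{l-k}^{(an)}(x|λ)`.
Here `H_m^{(α)}(x|λ)` is characterized by
`((1-λ)/(e^t-λ))^α e^{xt} = ∑_m H_m^{(α)}(x|λ) t^m/m!`, the Stirling numbers of the
second kind `S₂(l,m)` by `(e^t-1)^m = m! ∑_l S₂(l,m) t^l/l!`, and the Stirling numbers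
of the first kind `S₁(m,l)` by `x(x-1)⋯(x-m+1) = ∑_{l=0}^m S₁(m,l) x^l`. -/
theorem stmt2 (lam : ℂ) (hlam : lam ≠ 1) (n : ℕ) (hn : 1 ≤ n) (a : ℕ)
    (H : ℕ → ℕ → ℂ → ℂ)
    (hH : ∀ (α : ℕ) (x : ℂ),
      (expPS 1 - PowerSeries.C lam) ^ α *
          PowerSeries.mk (fun m => H α m x / (m.factorial : ℂ)) =
        PowerSeries.C (1 - lam) ^ α * expPS x)
    (S1 : ℕ → ℕ → ℂ)
    (hS1 : ∀ (m : ℕ) (x : ℂ),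
      ∏ i ∈ Finset.range m, (x - i) = ∑ l ∈ Finset.range (m + 1), S1 m l * x ^ l)
    (S2 : ℕ → ℕ → ℂ)
    (hS2 : ∀ m : ℕ,
      (expPS 1 - 1) ^ m =
        PowerSeries.C (m.factorial : ℂ) *
          PowerSeries.mk (fun l => S2 l m / (l.factorial : ℂ))) :
    ∀ x : ℂ,
      H (a * n) (n - 1) (x + 1) =
        ∑ l ∈ Finset.range n, ∑ k ∈ Finset.range (l + 1),
          S1 (n - 1) l * S2 (k + n) n *
            ((l.choose k : ℂ) / ((k + n).choose n : ℂ)) * H (a * n) (l - k) x := by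
  intro x
  obtain ⟨N, rfl⟩ : ∃ N, n = N + 1 := ⟨n - 1, by omega⟩
  have hshift := congrArg (coeff N) (apply_add_one_eq_expPS_mul hlam (hH (a * (N + 1))) x)
  rw [coeff_mk] at hshift
  rw [Nat.add_sub_cancel, div_eq_iff (Nat.cast_ne_zero.2 N.factorial_ne_zero) |>.1 hshift,
    mul_comm, ← constantCoeff_aeval_descPochhammer, constantCoeff_aeval_derivative,
    descPochhammer_natDegree]
  refine sum_congr rfl fun l hl => ?_
  rw [coeff_descPochhammer_of_forall_prod_range (hS1 N) (Nat.lt_succ_iff.1 (mem_range.1 hl)),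
    coeff_mul, Nat.sum_antidiagonal_eq_sum_range_succ_mk, mul_sum]
  refine sum_congr rfl fun k hk => ?_
  dsimp only
  rw [coeff_expSubOneDivX_pow (hS2 (N + 1)), coeff_mk,
    choose_div_choose _ (Nat.lt_succ_iff.1 (mem_range.1 hk))]
  field_simp
end

section
/- For every λ ∈ ℂ, every n ∈ ℤ_{≥0}, and every x, the identity of formal power series in t holds: e^{-xt} · (e^t - λ)^n = Σ_{l=0}^{n} Σ_{k=0}^{∞} ( Σ_{j=0}^{k} C(n,l) · (1-λ)^{n-l} · (C(k,j)/C(j+l, l)) · S₂(j+l, l) · (-1)^{k-j} · x^{k-j} ) · t^{k+l}/k!. -/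
open PowerSeries Nat

theorem mk_div_factorial_mul_mk_div_factorial {K : Type*} [Field K] [CharZero K]
    (b d : ℕ → K) :
    mk (fun j => b j / j !) * mk (fun j => d j / j !) =
      mk fun k => (∑ j ∈ Finset.range (k + 1), k.choose j * b j * d (k - j)) / k ! := by
  ext k
  rw [coeff_mul, Finset.Nat.sum_antidiagonal_eq_sum_range_succ_mk, coeff_mk, Finset.sum_div]
  refine Finset.sum_congr rfl fun j hj => ?_
  rw [coeff_mk, coeff_mk, cast_choose K (Finset.mem_range_succ_iff.mp hj)]
  field_simp [cast_ne_zero.mpr k.factorial_ne_zero]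

theorem X_dvd_expPS_one_sub_one : X ∣ expPS 1 - 1 := by
  rw [X_dvd_iff]
  simp [expPS]

theorem expPS_one_sub_one_pow_eq_X_pow_mul {S2 : ℕ → ℕ → ℂ} {l : ℕ}
    (hS2 : (expPS 1 - 1) ^ l = C (l ! : ℂ) * mk fun m => S2 m l / m !) :
    (expPS 1 - 1) ^ l = X ^ l * mk fun j => S2 (j + l) l / (j + l).choose l / j ! := by
  obtain ⟨g, hg⟩ := pow_dvd_pow_of_dvd X_dvd_expPS_one_sub_one l
  rw [hg]
  congr 1
  ext j
  have hcoeff := congrArg (coeff (j + l)) hg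
  rw [hS2, coeff_X_pow_mul, coeff_C_mul, coeff_mk] at hcoeff
  rw [← hcoeff, coeff_mk, cast_choose ℂ (le_add_left l j), Nat.add_sub_cancel]
  field_simp [cast_ne_zero.mpr j.factorial_ne_zero]

/-- For every `λ ∈ ℂ`, `n ∈ ℤ_{≥0}` and every `x`, the formal power
series identity
`e^{-xt} (e^t - λ)^n = ∑_{l=0}^{n} ∑_{k=0}^{∞}
  (∑_{j=0}^{k} C(n,l) (1-λ)^{n-l} (C(k,j)/C(j+l,l)) S₂(j+l,l) (-1)^{k-j} x^{k-j})
  t^{k+l}/k!`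
holds, where the Stirling numbers of the second kind `S₂(l,m)` are characterized by
`(e^t-1)^m = m! ∑_l S₂(l,m) t^l/l!`. -/
theorem stmt6 (lam : ℂ) (n : ℕ) (x : ℂ)
    (S2 : ℕ → ℕ → ℂ)
    (hS2 : ∀ m : ℕ,
      (expPS 1 - 1) ^ m =
        PowerSeries.C (m.factorial : ℂ) *
          PowerSeries.mk (fun l => S2 l m / (l.factorial : ℂ))) :
    expPS (-x) * (expPS 1 - PowerSeries.C lam) ^ n =
      ∑ l ∈ Finset.range (n + 1),
        PowerSeries.X ^ l *
          PowerSeries.mk (fun k =>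
            (∑ j ∈ Finset.range (k + 1),
                (n.choose l : ℂ) * (1 - lam) ^ (n - l) *
                  ((k.choose j : ℂ) / ((j + l).choose l : ℂ)) * S2 (j + l) l *
                  (-1) ^ (k - j) * x ^ (k - j)) /
              (k.factorial : ℂ)) := by
  have hsplit : expPS 1 - C lam = (expPS 1 - 1) + C (1 - lam) := by
    rw [map_sub, map_one]
    ring
  rw [hsplit, add_pow, Finset.mul_sum]
  refine Finset.sum_congr rfl fun l _ => ?_
  rw [expPS_one_sub_one_pow_eq_X_pow_mul (hS2 l)]
  calc expPS (-x) * ((X ^ l * mk fun j => S2 (j + l) l / (j + l).choose l / j !) *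
        C (1 - lam) ^ (n - l) * (n.choose l : ℂ⟦X⟧))
      = X ^ l * (C (n.choose l * (1 - lam) ^ (n - l)) *
          ((mk fun j => S2 (j + l) l / (j + l).choose l / j !) *
            mk fun m => (-x) ^ m / m !)) := by
        rw [expPS, ← map_natCast C, ← map_pow, map_mul]
        ring
    _ = _ := by
        rw [mk_div_factorial_mul_mk_div_factorial (fun j => S2 (j + l) l / (j + l).choose l)]
        congr 1
        ext k
        rw [coeff_C_mul, coeff_mk, coeff_mk, ← mul_div_assoc, Finset.mul_sum]
        congr 1
        refine Finset.sum_congr rfl fun j _ => ?_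
        rw [neg_pow]
        ring
end

section
/- For every λ ∈ ℂ with λ ≠ -1, every integer n ≥ 1, every integer k with 1 ≤ k ≤ n, and every μ ∈ ℤ_{≥0}, the identity C(μn, n-k)/(k-1)! = Σ_{a=0}^{n} Σ_{b=k}^{n} Σ_{l₁+⋯+l_n = b-k} C(n, a) · C(a, n-b) · C(b-k; l₁,…,l_n) · C(b-1, k-1) · λ^a · (1/(b-1)!) · Π_{i=1}^{n} C_{l_i}(μ|λ) holds, where the inner sum is over all n-tuples (l₁,…,l_n) of nonnegative integers summing to b-k and C(b-k; l₁,…,l_n) = (b-k)!/(l₁!⋯l_n!) is the multinomial coefficient. -/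
/-!
Put `G = 1 + λ(1 + X)` and let `F = ∑ C_j(μ|λ) X^j / j!` be the exponential generating function,
so that `G F = (1 + X)^μ` and hence `G^n F^n = (1 + X)^{μn}`. Compare the coefficients of
`X^{n-k}`: that of `G^n` at `X^{n-b}` is `∑_a C(n,a) λ^a C(a,n-b)` by the binomial theorem, and
that of `F^n` at `X^{b-k}` is `∑_l C(b-k; l) ∏ C_{l_i}(μ|λ) / (b-k)!`. Dividing by `(k-1)!` and
using `1 / ((k-1)! (b-k)!) = C(b-1,k-1) / (b-1)!` gives the identity.
-/

open Finset

namespace PowerSeries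

variable {R : Type*} [CommSemiring R]

theorem coeff_one_add_X_pow (N j : ℕ) : coeff j ((1 + X : R⟦X⟧) ^ N) = N.choose j := by
  rw [← Polynomial.coe_X, ← Polynomial.coe_one, ← Polynomial.coe_add, ← Polynomial.coe_pow,
    Polynomial.coeff_coe, Polynomial.coeff_one_add_X_pow]

theorem coeff_prod_fin {n : ℕ} (f : Fin n → R⟦X⟧) (m : ℕ) :
    coeff m (∏ i, f i) = ∑ l ∈ Nat.antidiagonalTuple n m, ∏ i, coeff (l i) (f i) := by
  rw [coeff_prod, ← piAntidiag_univ_fin_eq_antidiagonalTuple, finsuppAntidiag, sum_map,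
    ← sum_attach (piAntidiag univ m)]
  rfl

theorem coeff_pow_eq_sum_antidiagonalTuple (φ : R⟦X⟧) (n m : ℕ) :
    coeff m (φ ^ n) = ∑ l ∈ Nat.antidiagonalTuple n m, ∏ i, coeff (l i) φ := by
  rw [← Fin.prod_const, coeff_prod_fin]

theorem coeff_mul_eq_sum_Icc (φ ψ : R⟦X⟧) {k n : ℕ} (hkn : k ≤ n) :
    coeff (n - k) (φ * ψ) = ∑ b ∈ Icc k n, coeff (n - b) φ * coeff (b - k) ψ := by
  rw [coeff_mul, eq_comm]
  refine sum_nbij' (fun b => (n - b, b - k)) (fun p => n - p.1) ?_ ?_ ?_ ?_ fun _ _ => rfl <;>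
    intro x hx <;> simp only [HasAntidiagonal.mem_antidiagonal, mem_Icc, Prod.ext_iff] at hx ⊢ <;>
    omega

theorem coeff_one_add_C_mul_one_add_X_pow (c : R) (n j : ℕ) :
    coeff j ((1 + C c * (1 + X)) ^ n) = ∑ a ∈ range (n + 1), n.choose a * c ^ a * a.choose j := by
  rw [add_comm, add_pow, map_sum]
  refine sum_congr rfl fun a _ => ?_
  rw [one_pow, mul_one, mul_pow, ← map_pow, ← map_natCast (C (R := R)), mul_right_comm, ← map_mul,
    coeff_C_mul, coeff_one_add_X_pow, mul_comm (c ^ a)]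

theorem coeff_pow_mk_div_factorial {K : Type*} [Field K] [CharZero K] (f : ℕ → K) (n m : ℕ) :
    coeff m ((mk fun j => f j / j.factorial) ^ n) =
      (∑ l ∈ Nat.antidiagonalTuple n m, Nat.multinomial univ l * ∏ i, f (l i)) / m.factorial := by
  rw [coeff_pow_eq_sum_antidiagonalTuple, sum_div]
  refine sum_congr rfl fun l hl => ?_
  rw [← (Nat.mem_antidiagonalTuple.mp hl), ← Nat.multinomial_spec]
  simp only [coeff_mk, prod_div_distrib, Nat.cast_mul, Nat.cast_prod]
  rw [mul_comm (_ : K) (∏ i, f (l i)),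
    mul_div_mul_right _ _ (Nat.cast_ne_zero.mpr (Nat.multinomial_pos _ _).ne')]

end PowerSeries

open PowerSeries

theorem stmt9_general (lam : ℂ) (n : ℕ) (k : ℕ)
    (hk1 : 1 ≤ k) (hkn : k ≤ n) (μ : ℕ)
    (Ch : ℕ → ℕ → ℂ)
    (hCh : ∀ m : ℕ,
      (PowerSeries.C (R := ℂ) (1 + lam) + PowerSeries.C (R := ℂ) lam * PowerSeries.X) *
          PowerSeries.mk (fun j => Ch m j / (j.factorial : ℂ)) =
        (1 + PowerSeries.X) ^ m) :
    ((μ * n).choose (n - k) : ℂ) / ((k - 1).factorial : ℂ) =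
      ∑ a ∈ Finset.range (n + 1), ∑ b ∈ Finset.Icc k n,
        ∑ l ∈ Finset.Nat.antidiagonalTuple n (b - k),
          (n.choose a : ℂ) * (a.choose (n - b) : ℂ) *
            (Nat.multinomial Finset.univ l : ℂ) * ((b - 1).choose (k - 1) : ℂ) *
            lam ^ a * (1 / ((b - 1).factorial : ℂ)) *
            ∏ i : Fin n, Ch μ (l i) := by
  set G : ℂ⟦X⟧ := C (1 + lam) + C lam * X
  set F : ℂ⟦X⟧ := mk fun j => Ch μ j / j.factorial
  have hG : G = 1 + C lam * (1 + X) := by simp only [G, map_add, map_one]; ring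
  have hGF : G ^ n * F ^ n = (1 + X) ^ (μ * n) := by rw [← mul_pow, hCh μ, ← pow_mul, mul_comm μ]
  have hchoose : ∀ b ∈ Icc k n, ((b - 1).choose (k - 1) : ℂ) / (b - 1).factorial =
      ((k - 1).factorial * (b - k).factorial : ℂ)⁻¹ := by
    intro b hb
    rw [Nat.cast_choose ℂ (by grind), show b - 1 - (k - 1) = b - k by grind,
      div_div_cancel_left' (Nat.cast_ne_zero.mpr (Nat.factorial_ne_zero _))]
  calc ((μ * n).choose (n - k) : ℂ) / (k - 1).factorial
      = coeff (n - k) (G ^ n * F ^ n) / (k - 1).factorial := by rw [hGF, coeff_one_add_X_pow]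
    _ = ∑ b ∈ Icc k n, coeff (n - b) (G ^ n) * coeff (b - k) (F ^ n) / (k - 1).factorial := by
      rw [coeff_mul_eq_sum_Icc _ _ hkn, sum_div]
    _ = _ := by
      rw [sum_comm]
      refine sum_congr rfl fun b hb => ?_
      rw [hG, coeff_one_add_C_mul_one_add_X_pow, coeff_pow_mk_div_factorial, sum_div,
        sum_mul_sum, sum_div]
      refine sum_congr rfl fun a _ => ?_
      rw [sum_div]
      refine sum_congr rfl fun l _ => ?_
      linear_combination (n.choose a * (a.choose (n - b)) * Nat.multinomial univ l * lam ^ a *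
        ∏ i, Ch μ (l i) : ℂ) * (hchoose b hb).symm

/-- For `λ ≠ -1`, `n ≥ 1`, `1 ≤ k ≤ n` and `μ ∈ ℤ_{≥0}`,
`C(μn, n-k)/(k-1)! = ∑_{a=0}^{n} ∑_{b=k}^{n} ∑_{l₁+⋯+l_n = b-k}
  C(n,a) C(a,n-b) C(b-k; l₁,…,l_n) C(b-1,k-1) λ^a (1/(b-1)!) ∏_{i=1}^{n} C_{l_i}(μ|λ)`,
where the Changhee polynomials of the second kind are characterized (for `x = μ` a
nonnegative integer) by `∑_{k≥0} C_k(μ|λ) t^k/k! = (1+t)^μ/(1+λ(1+t))`, i.e.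
`(1+λ(1+t)) ∑_{k≥0} C_k(μ|λ) t^k/k! = (1+t)^μ`, and `C(b-k; l₁,…,l_n)` is the
multinomial coefficient. -/
theorem stmt9 (lam : ℂ) (hlam : lam ≠ -1) (n : ℕ) (hn : 1 ≤ n) (k : ℕ)
    (hk1 : 1 ≤ k) (hkn : k ≤ n) (μ : ℕ)
    (Ch : ℕ → ℕ → ℂ)
    (hCh : ∀ m : ℕ,
      (PowerSeries.C (R := ℂ) (1 + lam) + PowerSeries.C (R := ℂ) lam * PowerSeries.X) *
          PowerSeries.mk (fun j => Ch m j / (j.factorial : ℂ)) =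
        (1 + PowerSeries.X) ^ m) :
    ((μ * n).choose (n - k) : ℂ) / ((k - 1).factorial : ℂ) =
      ∑ a ∈ Finset.range (n + 1), ∑ b ∈ Finset.Icc k n,
        ∑ l ∈ Finset.Nat.antidiagonalTuple n (b - k),
          (n.choose a : ℂ) * (a.choose (n - b) : ℂ) *
            (Nat.multinomial Finset.univ l : ℂ) * ((b - 1).choose (k - 1) : ℂ) *
            lam ^ a * (1 / ((b - 1).factorial : ℂ)) *
            ∏ i : Fin n, Ch μ (l i) :=
  stmt9_general lam n k hk1 hkn μ Ch hCh
end
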